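/- arXiv:1502.01661 — 4 statements merged into one kernel-verified Lean document; each statement's English description precedes it below -/
import Mathlib

section
/- Let (W,S) be a Coxeter system and s,t ∈ S with st of order 3. For every w ∈ D_R(s,t), the set {ws, wt} ∩ D_R(s,t) consists of exactly one element, denoted w*; moreover the map w ↦ w* is an involution of D_R(s,t). -/
/-!
Following Björner–Brenti, let each simple reflection `s_k` act on `W × ZMod 2` by
`(u, e) ↦ (s_k u s_k, e + [u = s_k])`. These involutions satisfy the Coxeter relations, so they
define an action of `W`, and the sign `η(w, u)` acquired by `(u, 0)` under `w` is the parity of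
the number of occurrences of `u` in the right inversion sequence of any word for `w`. Reading it
off a reduced word ending in `k` shows that `k` is a right descent of `w` iff `η(w, s_k) = 1`,
while the action gives `η(w s_k, u) = [u = s_k] + η(w, s_k u s_k)`.

For `w ∈ D_R(s,t)` put `a = η(w, s)`, `b = η(w, t)` and `c = η(w, sts) = η(w, tst)`, so that
`a + b = 1`. Then `ws ∈ D_R(s,t)` iff `c = a` and `wt ∈ D_R(s,t)` iff `c = b`: exactly one of
them holds, and `w*` is `ws` or `wt`, whence `(w*)* = w`.
-/

namespace CoxeterSystem

open List

variable {B W : Type*} [Group W] {M : CoxeterMatrix B} (cs : CoxeterSystem M W)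

theorem simple_mul_mul_simple_eq_simple_iff (i : B) (u : W) :
    cs.simple i * u * cs.simple i = cs.simple i ↔ u = cs.simple i := by
  rw [mul_assoc, mul_eq_left, mul_eq_one_iff_eq_inv, inv_simple]

theorem alternatingWord_add (k l : B) (m n : ℕ) :
    alternatingWord k l (m + n) =
      (if Even n then alternatingWord k l m else alternatingWord l k m) ++
        alternatingWord k l n := by
  induction m with
  | zero => split_ifs <;> simp [alternatingWord]
  | succ m ih =>
    rw [Nat.add_right_comm, alternatingWord_succ', ih, alternatingWord_succ',
      alternatingWord_succ']
    by_cases hn : Even n <;> by_cases hm : Even m <;> simp [hn, hm, Nat.even_add]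

theorem prod_map_alternatingWord_two_mul {G : Type*} [Monoid G] (f : B → G) (k l : B) (m : ℕ) :
    ((alternatingWord k l (2 * m)).map f).prod = (f k * f l) ^ m := by
  induction m with
  | zero => simp [alternatingWord]
  | succ m ih =>
    rw [mul_add_one, add_comm, alternatingWord_add, if_pos (even_two_mul m), map_append,
      prod_append, ih, pow_succ']
    simp [alternatingWord, mul_assoc]

theorem rightInvSeq_alternatingWord (k l : B) (n : ℕ) :
    cs.rightInvSeq (alternatingWord k l n) = (range n).reverse.map fun r =>
      (cs.wordProd (alternatingWord k l r))⁻¹ * cs.wordProd (alternatingWord k l (r + 1)) := by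
  induction n with
  | zero => rfl
  | succ n ih =>
    rw [alternatingWord_succ', rightInvSeq, ih, range_succ]
    simp [alternatingWord_succ', wordProd_cons, mul_assoc]

theorem wordProd_alternatingWord_add_braid (k l : B) (r : ℕ) :
    cs.wordProd (alternatingWord k l (M k l + r)) =
      cs.wordProd (alternatingWord k l (M k l)) * cs.wordProd (alternatingWord k l r) := by
  rw [alternatingWord_add, wordProd_append]
  split_ifs
  · rfl
  · rw [cs.wordProd_braidWord_eq k l, M.symmetric]

theorem _root_.List.even_count_map_range_two_mul {α : Type*} [BEq α] {T : ℕ → α} {m : ℕ}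
    (hT : Function.Periodic T m) (a : α) : Even (((range (2 * m)).map T).count a) := by
  have hshift : T ∘ (m + ·) = T := funext fun r => by rw [Function.comp_apply, add_comm, hT]
  rw [two_mul, range_add, map_append, map_map, hshift, count_append]
  exact ⟨_, rfl⟩

section ReflectionAction

open scoped Classical

-- By the braid relation this inversion sequence is periodic with period `M k l`.
theorem even_count_rightInvSeq_alternatingWord (k l : B) (u : W) :
    Even ((cs.rightInvSeq (alternatingWord k l (2 * M k l))).count u) := by
  rw [rightInvSeq_alternatingWord, map_reverse, count_reverse]
  refine even_count_map_range_two_mul (fun r => ?_) u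
  rw [add_right_comm, add_comm r, add_comm (r + 1), wordProd_alternatingWord_add_braid,
    wordProd_alternatingWord_add_braid]
  group

noncomputable def reflectionPerm (i : B) : Equiv.Perm (W × ZMod 2) :=
  Function.Involutive.toPerm
    (fun p => (cs.simple i * p.1 * cs.simple i, p.2 + if p.1 = cs.simple i then 1 else 0))
    (by
      rintro ⟨u, e⟩
      simp only [Prod.mk.injEq, simple_mul_mul_simple_eq_simple_iff]
      refine ⟨by simp [mul_assoc], ?_⟩
      split_ifs <;> simp [add_assoc, CharTwo.add_self_eq_zero])

theorem reflectionPerm_apply (i : B) (u : W) (e : ZMod 2) :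
    cs.reflectionPerm i (u, e) =
      (cs.simple i * u * cs.simple i, e + if u = cs.simple i then 1 else 0) :=
  rfl

theorem prod_map_reflectionPerm (ω : List B) (u : W) (e : ZMod 2) :
    (ω.map cs.reflectionPerm).prod (u, e) =
      (cs.wordProd ω * u * (cs.wordProd ω)⁻¹, e + ((cs.rightInvSeq ω).count u : ZMod 2)) := by
  induction ω generalizing u e with
  | nil => simp
  | cons i ω ih =>
    have hconj : cs.wordProd ω * u * (cs.wordProd ω)⁻¹ = cs.simple i ↔
        (cs.wordProd ω)⁻¹ * cs.simple i * cs.wordProd ω = u := by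
      constructor <;> intro h <;> rw [← h] <;> group
    rw [map_cons, prod_cons, Equiv.Perm.mul_apply, ih, reflectionPerm_apply, rightInvSeq,
      wordProd_cons, count_cons]
    simp only [beq_iff_eq, ← hconj]
    refine Prod.ext (by simp [mul_assoc]) ?_
    split_ifs <;> simp [add_assoc]

theorem isLiftable_reflectionPerm : M.IsLiftable cs.reflectionPerm := by
  intro k l
  have hone : cs.wordProd (alternatingWord k l (2 * M k l)) = 1 := by
    rw [wordProd, prod_map_alternatingWord_two_mul, simple_mul_simple_pow]
  ext1 ⟨u, e⟩
  rw [← prod_map_alternatingWord_two_mul, prod_map_reflectionPerm, hone,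
    (cs.even_count_rightInvSeq_alternatingWord k l u).natCast_zmod_two]
  simp

noncomputable def reflectionAction : W →* Equiv.Perm (W × ZMod 2) :=
  cs.lift ⟨cs.reflectionPerm, cs.isLiftable_reflectionPerm⟩

theorem reflectionAction_simple (i : B) :
    cs.reflectionAction (cs.simple i) = cs.reflectionPerm i :=
  cs.lift_apply_simple cs.isLiftable_reflectionPerm i

theorem reflectionAction_wordProd (ω : List B) :
    cs.reflectionAction (cs.wordProd ω) = (ω.map cs.reflectionPerm).prod := by
  simp only [wordProd, map_list_prod, map_map, Function.comp_def, reflectionAction_simple]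

noncomputable def inversionParity (w u : W) : ZMod 2 := (cs.reflectionAction w (u, 0)).2

theorem inversionParity_wordProd (ω : List B) (u : W) :
    cs.inversionParity (cs.wordProd ω) u = (cs.rightInvSeq ω).count u := by
  rw [inversionParity, reflectionAction_wordProd, prod_map_reflectionPerm, zero_add]

theorem reflectionAction_apply_snd (w u : W) (e : ZMod 2) :
    (cs.reflectionAction w (u, e)).2 = e + cs.inversionParity w u := by
  obtain ⟨ω, -, rfl⟩ := cs.exists_isReduced w
  rw [inversionParity_wordProd, reflectionAction_wordProd, prod_map_reflectionPerm]

theorem inversionParity_mul_simple (w : W) (k : B) (u : W) :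
    cs.inversionParity (w * cs.simple k) u =
      (if u = cs.simple k then 1 else 0) + cs.inversionParity w (cs.simple k * u * cs.simple k) := by
  rw [inversionParity, map_mul, Equiv.Perm.mul_apply, reflectionAction_simple,
    reflectionPerm_apply, zero_add, reflectionAction_apply_snd]

theorem inversionParity_eq_one_iff_mem_rightInvSeq {ω : List B} (hω : cs.IsReduced ω) (u : W) :
    cs.inversionParity (cs.wordProd ω) u = 1 ↔ u ∈ cs.rightInvSeq ω := by
  rw [inversionParity_wordProd]
  by_cases hu : u ∈ cs.rightInvSeq ω
  · simp [hu, count_eq_one_of_mem hω.nodup_rightInvSeq hu]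
  · simp [hu, count_eq_zero_of_not_mem hu]

theorem isRightDescent_iff_inversionParity_eq_one (w : W) (k : B) :
    cs.IsRightDescent w k ↔ cs.inversionParity w (cs.simple k) = 1 := by
  constructor
  · intro h
    obtain ⟨α, hα, hαw⟩ := cs.exists_isReduced (w * cs.simple k)
    have hw : cs.wordProd (α.concat k) = w := by
      rw [wordProd_concat, ← hαw, simple_mul_simple_cancel_right]
    have hred : cs.IsReduced (α.concat k) := by
      rw [IsReduced, hw, length_concat, ← hα.eq, ← hαw, cs.isRightDescent_iff.mp h]
    rw [← hw, cs.inversionParity_eq_one_iff_mem_rightInvSeq hred, rightInvSeq_concat]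
    simp
  · intro h
    obtain ⟨ω, hω, rfl⟩ := cs.exists_isReduced w
    rw [cs.inversionParity_eq_one_iff_mem_rightInvSeq hω] at h
    exact (cs.isRightInversion_of_mem_rightInvSeq hω h).2

end ReflectionAction

theorem simple_ne_simple_of_orderOf_eq_three {i j : B}
    (hm : orderOf (cs.simple i * cs.simple j) = 3) : cs.simple i ≠ cs.simple j := by
  intro h
  rw [h, simple_mul_simple_self, orderOf_one] at hm
  omega

theorem braid_of_orderOf_eq_three {i j : B} (hm : orderOf (cs.simple i * cs.simple j) = 3) :
    cs.simple i * cs.simple j * cs.simple i = cs.simple j * cs.simple i * cs.simple j := by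
  have hcube : (cs.simple i * cs.simple j * cs.simple i) * (cs.simple j * cs.simple i * cs.simple j)
      = 1 := by
    have h := pow_orderOf_eq_one (cs.simple i * cs.simple j)
    rw [hm] at h
    simpa only [pow_succ, pow_zero, one_mul, mul_assoc] using h
  rw [eq_inv_of_mul_eq_one_left hcube]
  simp [mul_assoc]

theorem xor_isRightDescent_mul_simple {i j : B} (hm : orderOf (cs.simple i * cs.simple j) = 3)
    {w : W} (hw : Xor (cs.IsRightDescent w i) (cs.IsRightDescent w j)) :
    Xor (Xor (cs.IsRightDescent (w * cs.simple i) i) (cs.IsRightDescent (w * cs.simple i) j))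
      (Xor (cs.IsRightDescent (w * cs.simple j) i) (cs.IsRightDescent (w * cs.simple j) j)) := by
  have hne := cs.simple_ne_simple_of_orderOf_eq_three hm
  simp only [isRightDescent_iff_inversionParity_eq_one, inversionParity_mul_simple, if_pos,
    if_neg hne, if_neg hne.symm, simple_mul_simple_cancel_right, zero_add,
    ← cs.braid_of_orderOf_eq_three hm] at hw ⊢
  generalize cs.inversionParity w (cs.simple i) = a at *
  generalize cs.inversionParity w (cs.simple j) = b at *
  generalize cs.inversionParity w (cs.simple i * cs.simple j * cs.simple i) = c
  revert a b c
  decide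

end CoxeterSystem

/-- Let `(W,S)` be a Coxeter system and `s = s_i`, `t = s_j` with `st` of order `3`.
For every `w ∈ D_R(s,t)`, the set `{ws, wt} ∩ D_R(s,t)` consists of exactly one
element, denoted `w*`; moreover `w ↦ w*` is an involution of `D_R(s,t)` (i.e. `w*` again
lies in `D_R(s,t)` and `(w*)* = w`). -/
theorem stmt4 {B W : Type*} [Group W] {M : CoxeterMatrix B} (cs : CoxeterSystem M W)
    (i j : B) (hm : orderOf (cs.simple i * cs.simple j) = 3) :
    (∀ w ∈ {w : W | Xor' (cs.IsRightDescent w i) (cs.IsRightDescent w j)},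
      ∃! z : W, z ∈ ({w * cs.simple i, w * cs.simple j} : Set W) ∩
        {w : W | Xor' (cs.IsRightDescent w i) (cs.IsRightDescent w j)}) ∧
    ∀ w ∈ {w : W | Xor' (cs.IsRightDescent w i) (cs.IsRightDescent w j)},
      ∀ z ∈ ({w * cs.simple i, w * cs.simple j} : Set W) ∩
        {w : W | Xor' (cs.IsRightDescent w i) (cs.IsRightDescent w j)},
        w ∈ ({z * cs.simple i, z * cs.simple j} : Set W) ∩
          {w : W | Xor' (cs.IsRightDescent w i) (cs.IsRightDescent w j)} := by
  refine ⟨fun w hw => ?_, ?_⟩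
  · rcases cs.xor_isRightDescent_mul_simple hm hw with ⟨hi, hj⟩ | ⟨hj, hi⟩
    · refine ⟨w * cs.simple i, ⟨.inl rfl, hi⟩, ?_⟩
      rintro z ⟨rfl | rfl, hz⟩
      exacts [rfl, absurd hz hj]
    · refine ⟨w * cs.simple j, ⟨.inr rfl, hj⟩, ?_⟩
      rintro z ⟨rfl | rfl, hz⟩
      exacts [absurd hz hi, rfl]
  · rintro w hw z ⟨rfl | rfl, -⟩
    · exact ⟨.inl (cs.simple_mul_simple_cancel_right i).symm, hw⟩
    · exact ⟨.inr (cs.simple_mul_simple_cancel_right j).symm, hw⟩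
end

section
/- Let (W,S) be a Coxeter system with Hecke algebra H over A = ℤ[Γ] with positive weight function p, and Kazhdan–Lusztig left preorder ≤_L. If x ≤_L y, then the right descent set of y is contained in the right descent set of x: R(y) ⊆ R(x). Consequently, if x ∼_L y then R(x) = R(y), and for each I ⊆ S the set {w ∈ W | R(w) = I} is a union of left cells. -/
/-!
For `s ∈ R(y)` one has `C_y T_s = v^{p_s} C_y`: the difference is bar-invariant, and at every
`T_z` with `z` of maximal length its coefficient lies in `A_{<0}`, so it vanishes because the bar
involution is unitriangular on the standard basis. Hence `C_{s'} C_y` is a `v^{p_s}`-eigenvector of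
right multiplication by `T_s`. Such an eigenvector involves no `C_x` with `xs > x`: among those
coefficients take the top degree `β`, attained at `x`. The eigenvector equation writes the
`T_x`-coefficient as `v^{-p_s}` times the `T_{xs}`-coefficient, of degree `< β`, while by the
triangularity of the `C`-basis it is the coefficient of `C_x` up to terms of degree `< β`.
So `C_x` occurring in `C_{s'} C_y` forces `R(y) ⊆ R(x)`, and transitivity does the rest.
-/

open CoxeterSystem

/-- `vv a` is the basis element `v^a` of `A = ℤ[Γ]`. -/
noncomputable def vv {Γ : Type*} [AddCommGroup Γ] [LinearOrder Γ] [IsOrderedAddMonoid Γ] (a : Γ) :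
    AddMonoidAlgebra ℤ Γ := AddMonoidAlgebra.single a 1

/-- The bar involution on `A = ℤ[Γ]`, determined by `v^a ↦ v^{-a}`. -/
noncomputable def barA (Γ : Type*) [AddCommGroup Γ] [LinearOrder Γ] [IsOrderedAddMonoid Γ] :
    AddMonoidAlgebra ℤ Γ ≃ₐ[ℤ] AddMonoidAlgebra ℤ Γ :=
  AddMonoidAlgebra.domCongr ℤ ℤ (AddEquiv.neg Γ)

/-- The generic Iwahori–Hecke algebra `H` of the Coxeter system `cs` over `A = ℤ[Γ]`
with (positive) weight function `p`, together with its Kazhdan–Lusztig basis `C`: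
`T` is the standard basis (with `T_1 = 1` and the usual multiplication rule),
`bar` is the bar involution (the semilinear ring involution with `bar T_s = T_s⁻¹`),
and `C` is the unique basis with `bar (C_w) = C_w` and
`C_w ∈ T_w + Σ_y A_{<0} T_y` (Kazhdan--Lusztig, Lusztig). -/
structure KLHecke {B W : Type*} [Group W] {M : CoxeterMatrix B}
    (cs : CoxeterSystem M W) (Γ : Type*) [AddCommGroup Γ] [LinearOrder Γ] [IsOrderedAddMonoid Γ]
    (p : B → Γ) (H : Type*) [Ring H] [Algebra (AddMonoidAlgebra ℤ Γ) H] where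
  pos : ∀ i, 0 < p i
  conj : ∀ i j, IsConj (cs.simple i) (cs.simple j) → p i = p j
  T : Module.Basis W (AddMonoidAlgebra ℤ Γ) H
  T_one : T 1 = 1
  T_mul : ∀ (i : B) (w : W), T (cs.simple i) * T w =
    if cs.length w < cs.length (cs.simple i * w) then T (cs.simple i * w)
    else T (cs.simple i * w) + (vv (p i) - vv (-p i)) • T w
  bar : H →+* H
  bar_smul : ∀ (a : AddMonoidAlgebra ℤ Γ) (x : H),
    bar (a • x) = (barA Γ a) • bar x
  bar_T : ∀ i : B, bar (T (cs.simple i)) =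
    T (cs.simple i) + (vv (-p i) - vv (p i)) • 1
  C : Module.Basis W (AddMonoidAlgebra ℤ Γ) H
  bar_C : ∀ w, bar (C w) = C w
  C_diag : ∀ w, T.repr (C w) w = 1
  C_lt : ∀ w y, y ≠ w → ∀ γ ∈ (T.repr (C w) y).coeff.support, γ < 0

namespace KLHecke

variable {B W : Type*} [Group W] {M : CoxeterMatrix B}
    {cs : CoxeterSystem M W} {Γ : Type*} [AddCommGroup Γ] [LinearOrder Γ] [IsOrderedAddMonoid Γ]
    {p : B → Γ} {H : Type*} [Ring H] [Algebra (AddMonoidAlgebra ℤ Γ) H]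

/-- `x ←_L y` : `C'_x` occurs in `C'_s C'_y` for some `s ∈ S`. -/
def leftStep (d : KLHecke cs Γ p H) (x y : W) : Prop :=
  ∃ i : B, d.C.repr (d.C (cs.simple i) * d.C y) x ≠ 0

/-- The Kazhdan–Lusztig left preorder `x ≤_L y` (reflexive-transitive closure of
`←_L`). -/
def LeftLe (d : KLHecke cs Γ p H) : W → W → Prop :=
  Relation.ReflTransGen d.leftStep

/-- `x ←_R y` : `C'_x` occurs in `C'_y C'_s` for some `s ∈ S`. -/
def rightStep (d : KLHecke cs Γ p H) (x y : W) : Prop :=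
  ∃ i : B, d.C.repr (d.C y * d.C (cs.simple i)) x ≠ 0

/-- The Kazhdan–Lusztig right preorder `x ≤_R y`. -/
def RightLe (d : KLHecke cs Γ p H) : W → W → Prop :=
  Relation.ReflTransGen d.rightStep

/-- The left cell equivalence `x ∼_L y`. -/
def LeftEquiv (d : KLHecke cs Γ p H) (x y : W) : Prop :=
  d.LeftLe x y ∧ d.LeftLe y x

end KLHecke

namespace Module.Basis

variable {ι R M : Type*} [CommSemiring R] [AddCommMonoid M] [Module R M]

lemma repr_map_of_involutive (b : Module.Basis ι R M) {σ : ι → ι}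
    (hσ : Function.Involutive σ) (P : ι → Prop) [DecidablePred P] (c : R) (φ : M →ₗ[R] M)
    (hφ : ∀ u, φ (b u) = b (σ u) + (if P u then c else 0) • b u) (x : M) (z : ι) :
    b.repr (φ x) z = b.repr x (σ z) + (if P z then c else 0) * b.repr x z := by
  classical
  have key : Finsupp.lapply z ∘ₗ b.repr.toLinearMap ∘ₗ φ =
      Finsupp.lapply (σ z) ∘ₗ b.repr.toLinearMap +
        (if P z then c else 0) • (Finsupp.lapply z ∘ₗ b.repr.toLinearMap) := by
    refine b.ext fun u => ?_
    by_cases huz : u = z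
    · subst huz
      by_cases hP : P u <;> simp [hφ, hP, Finsupp.single_apply, eq_comm]
    · by_cases hP : P u <;> by_cases hP' : P z <;>
        simp [hφ, hP, hP', Finsupp.single_apply, huz, hσ.eq_iff]
  exact LinearMap.congr_fun key x

end Module.Basis

open scoped Pointwise

namespace AddMonoidAlgebra

variable {k G : Type*} [Semiring k]

lemma mul_mem_supported_add [Add G] {s t : Set G} {x y : AddMonoidAlgebra k G}
    (hx : x ∈ supported k k s) (hy : y ∈ supported k k t) : x * y ∈ supported k k (s + t) := by
  classical
  rw [mem_supported] at hx hy ⊢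
  refine (Finset.coe_subset.mpr (support_coeff_mul_subset x y)).trans ?_
  rw [Finset.coe_add]
  exact Set.add_subset_add hx hy

lemma mul_mem_supported_Iio [Add G] [PartialOrder G] [AddLeftStrictMono G] [AddRightStrictMono G]
    {a b : G} {x y : AddMonoidAlgebra k G} (hx : x ∈ supported k k (Set.Iic a))
    (hy : y ∈ supported k k (Set.Iio b)) : x * y ∈ supported k k (Set.Iio (a + b)) :=
  supported_mono (Set.Iic_add_Iio_subset a b) (mul_mem_supported_add hx hy)

end AddMonoidAlgebra

open AddMonoidAlgebra

section LaurentPolynomials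

variable {Γ : Type*} [AddCommGroup Γ] [LinearOrder Γ] [IsOrderedAddMonoid Γ]

lemma vv_add (a b : Γ) : vv (a + b) = vv a * vv b := by
  simp [vv, single_mul_single]

lemma vv_zero : vv (0 : Γ) = 1 := rfl

lemma vv_mem_supported {a : Γ} {s : Set Γ} (ha : a ∈ s) : vv a ∈ supported ℤ ℤ s := by
  simpa [vv, mem_supported, coeff_single] using ha

lemma coeff_barA (a : AddMonoidAlgebra ℤ Γ) (γ : Γ) : (barA Γ a).coeff γ = a.coeff (-γ) := by
  rw [barA, coeff_domCongr]
  rfl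

lemma barA_vv (a : Γ) : barA Γ (vv a) = vv (-a) := by
  rw [vv, vv, barA, domCongr_single]
  rfl

lemma eq_zero_of_barA_eq_self {a : AddMonoidAlgebra ℤ Γ} (ha : barA Γ a = a)
    (hneg : a ∈ supported ℤ ℤ (Set.Iio 0)) : a = 0 := by
  rw [← coeff_eq_zero, ← Finsupp.support_eq_empty, Finset.eq_empty_iff_forall_notMem]
  intro γ hγ
  have hγ' : -γ ∈ a.coeff.support := by
    rwa [Finsupp.mem_support_iff, ← coeff_barA, ha, ← Finsupp.mem_support_iff]
  exact (neg_pos.mpr (hneg hγ)).not_gt (hneg hγ')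

end LaurentPolynomials

namespace CoxeterSystem

variable {B W : Type*} [Group W] {M : CoxeterMatrix B} (cs : CoxeterSystem M W)

noncomputable instance (w : W) (i : B) : Decidable (cs.IsLeftDescent w i) :=
  inferInstanceAs (Decidable (cs.length _ < _))

noncomputable instance (w : W) (i : B) : Decidable (cs.IsRightDescent w i) :=
  inferInstanceAs (Decidable (cs.length _ < _))

end CoxeterSystem

namespace KLHecke

variable {B W : Type*} [Group W] {M : CoxeterMatrix B}
    {cs : CoxeterSystem M W} {Γ : Type*} [AddCommGroup Γ] [LinearOrder Γ] [IsOrderedAddMonoid Γ]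
    {p : B → Γ} {H : Type*} [Ring H] [Algebra (AddMonoidAlgebra ℤ Γ) H]
    (d : KLHecke cs Γ p H)

lemma T_simple_mul (i : B) (w : W) :
    d.T (cs.simple i) * d.T w = d.T (cs.simple i * w) +
      (if cs.IsLeftDescent w i then vv (p i) - vv (-p i) else 0) • d.T w := by
  rw [d.T_mul]
  by_cases h : cs.IsLeftDescent w i
  · rw [if_neg (not_lt.mpr h.le), if_pos h]
  · rw [if_pos (by have := cs.not_isLeftDescent_iff.mp h; omega), if_neg h, zero_smul, add_zero]

lemma T_simple_mul_of_not_isLeftDescent {w : W} {i : B} (h : ¬ cs.IsLeftDescent w i) :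
    d.T (cs.simple i) * d.T w = d.T (cs.simple i * w) := by
  rw [d.T_simple_mul, if_neg h, zero_smul, add_zero]

lemma T_eq_T_simple_mul_of_isLeftDescent {w : W} {i : B} (h : cs.IsLeftDescent w i) :
    d.T w = d.T (cs.simple i) * d.T (cs.simple i * w) := by
  rw [d.T_simple_mul_of_not_isLeftDescent (cs.isLeftDescent_iff_not_isLeftDescent_mul.mp h),
    cs.simple_mul_simple_cancel_left]

lemma T_mul_simple_of_not_isRightDescent {w : W} {i : B} (h : ¬ cs.IsRightDescent w i) :
    d.T w * d.T (cs.simple i) = d.T (w * cs.simple i) := by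
  induction hn : cs.length w using Nat.strong_induction_on generalizing w with
  | _ n ih =>
  rcases eq_or_ne w 1 with rfl | hw
  · rw [d.T_one, one_mul, one_mul]
  obtain ⟨j, hj⟩ := cs.exists_leftDescent_of_ne_one hw
  set u := cs.simple j * w
  have hwu : w = cs.simple j * u := (cs.simple_mul_simple_cancel_left j).symm
  have hlu : cs.length u + 1 = cs.length w := cs.isLeftDescent_iff.mp hj
  have hlws : cs.length (w * cs.simple i) = cs.length w + 1 := cs.not_isRightDescent_iff.mp h
  have hlus : cs.length (w * cs.simple i) ≤ cs.length (u * cs.simple i) + 1 :=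
    calc cs.length (w * cs.simple i) = cs.length (cs.simple j * (u * cs.simple i)) := by
          rw [hwu, mul_assoc]
      _ ≤ cs.length (cs.simple j) + cs.length (u * cs.simple i) := cs.length_mul_le _ _
      _ = cs.length (u * cs.simple i) + 1 := by rw [cs.length_simple, add_comm]
  have hus : cs.length (u * cs.simple i) = cs.length u + 1 := by
    rcases cs.length_mul_simple u i with h' | h' <;> omega
  have hsus : ¬ cs.IsLeftDescent (u * cs.simple i) j := by
    rw [cs.not_isLeftDescent_iff, ← mul_assoc, ← hwu]
    omega
  rw [d.T_eq_T_simple_mul_of_isLeftDescent hj, mul_assoc,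
    ih _ (by omega) (cs.not_isRightDescent_iff.mpr hus) rfl,
    d.T_simple_mul_of_not_isLeftDescent hsus, ← mul_assoc, ← hwu]

lemma T_simple_mul_self (i : B) :
    d.T (cs.simple i) * d.T (cs.simple i) = 1 + (vv (p i) - vv (-p i)) • d.T (cs.simple i) := by
  rw [d.T_simple_mul, if_pos (by simp [IsLeftDescent, cs.length_simple]),
    cs.simple_mul_simple_self, d.T_one]

lemma T_mul_simple (w : W) (i : B) :
    d.T w * d.T (cs.simple i) = d.T (w * cs.simple i) +
      (if cs.IsRightDescent w i then vv (p i) - vv (-p i) else 0) • d.T w := by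
  by_cases h : cs.IsRightDescent w i
  · have h' := cs.isRightDescent_iff_not_isRightDescent_mul.mp h
    have hTw : d.T w = d.T (w * cs.simple i) * d.T (cs.simple i) := by
      rw [d.T_mul_simple_of_not_isRightDescent h', cs.simple_mul_simple_cancel_right]
    rw [if_pos h, hTw, mul_assoc, d.T_simple_mul_self, mul_add, mul_one, mul_smul_comm]
  · rw [d.T_mul_simple_of_not_isRightDescent h, if_neg h, zero_smul, add_zero]

lemma repr_T_simple_mul (i : B) (x : H) (z : W) :
    d.T.repr (d.T (cs.simple i) * x) z = d.T.repr x (cs.simple i * z) +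
      (if cs.IsLeftDescent z i then vv (p i) - vv (-p i) else 0) * d.T.repr x z :=
  d.T.repr_map_of_involutive (fun _ => cs.simple_mul_simple_cancel_left i) _ _
    (LinearMap.mulLeft _ (d.T (cs.simple i))) (d.T_simple_mul i) x z

lemma repr_mul_T_simple (i : B) (x : H) (z : W) :
    d.T.repr (x * d.T (cs.simple i)) z = d.T.repr x (z * cs.simple i) +
      (if cs.IsRightDescent z i then vv (p i) - vv (-p i) else 0) * d.T.repr x z :=
  d.T.repr_map_of_involutive (fun _ => cs.simple_mul_simple_cancel_right i) _ _
    (LinearMap.mulRight _ (d.T (cs.simple i))) (fun u => d.T_mul_simple u i) x z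

lemma repr_bar_T_of_length_le {w z : W} (hz : cs.length w ≤ cs.length z) :
    d.T.repr (d.bar (d.T w)) z = d.T.repr (d.T w) z := by
  classical
  induction hn : cs.length w using Nat.strong_induction_on generalizing w z with
  | _ n ih =>
  rcases eq_or_ne w 1 with rfl | hw
  · rw [d.T_one, map_one]
  obtain ⟨j, hj⟩ := cs.exists_leftDescent_of_ne_one hw
  obtain ⟨u, rfl⟩ : ∃ u, w = cs.simple j * u := ⟨_, (cs.simple_mul_simple_cancel_left j).symm⟩
  have hlu : cs.length u + 1 = cs.length (cs.simple j * u) := by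
    simpa [cs.simple_mul_simple_cancel_left] using cs.isLeftDescent_iff.mp hj
  have hbar : d.bar (d.T (cs.simple j * u)) =
      d.T (cs.simple j) * d.bar (d.T u) + (vv (-p j) - vv (p j)) • d.bar (d.T u) := by
    rw [d.T_eq_T_simple_mul_of_isLeftDescent hj, map_mul, d.bar_T, add_mul, smul_mul_assoc,
      one_mul, cs.simple_mul_simple_cancel_left]
  have hlsz : cs.length u ≤ cs.length (cs.simple j * z) := by
    rcases cs.length_simple_mul z j with h | h <;> omega
  have hzu : z ≠ u := fun h => by rw [h] at hz; omega
  rw [hbar, map_add, map_smul, Finsupp.add_apply, Finsupp.smul_apply, d.repr_T_simple_mul,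
    ih _ (by omega) hlsz rfl, ih _ (by omega) (by omega) rfl, d.T.repr_self, d.T.repr_self,
    Finsupp.single_eq_of_ne hzu, mul_zero, smul_zero, add_zero, add_zero]
  rw [Finsupp.single_apply, Finsupp.single_apply, ← eq_inv_mul_iff_mul_eq, cs.inv_simple]

lemma repr_bar_of_length_le {x : H} {z₀ : W}
    (hmax : ∀ z ∈ (d.T.repr x).support, cs.length z ≤ cs.length z₀) :
    d.T.repr (d.bar x) z₀ = barA Γ (d.T.repr x z₀) := by
  conv_lhs => rw [← d.T.linearCombination_repr x, Finsupp.linearCombination_apply,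
    map_finsuppSum, map_finsuppSum, Finsupp.sum_apply]
  have hterm : ∀ z ∈ (d.T.repr x).support, d.T.repr (d.bar (d.T.repr x z • d.T z)) z₀ =
      barA Γ (d.T.repr x z) * Finsupp.single z 1 z₀ := fun z hz => by
    rw [d.bar_smul, map_smul, Finsupp.smul_apply, d.repr_bar_T_of_length_le (hmax z hz),
      d.T.repr_self, smul_eq_mul]
  rw [Finsupp.sum, Finset.sum_congr rfl hterm, Finset.sum_eq_single z₀]
  · rw [Finsupp.single_eq_same, mul_one]
  · intro z _ hz
    rw [Finsupp.single_eq_of_ne hz.symm, mul_zero]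
  · intro hz
    rw [Finsupp.notMem_support_iff.mp hz, map_zero, zero_mul]

lemma eq_zero_of_bar_eq_self {x : H} (hx : d.bar x = x)
    (htop : ∀ z₀, (∀ z ∈ (d.T.repr x).support, cs.length z ≤ cs.length z₀) →
      d.T.repr x z₀ ∈ supported ℤ ℤ (Set.Iio 0)) : x = 0 := by
  by_contra hx0
  have hne : (d.T.repr x).support.Nonempty := by
    rwa [Finsupp.support_nonempty_iff, ne_eq, LinearEquiv.map_eq_zero_iff]
  obtain ⟨z₀, hz₀, hmax⟩ := Finset.exists_max_image _ cs.length hne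
  refine Finsupp.mem_support_iff.mp hz₀ (eq_zero_of_barA_eq_self ?_ (htop z₀ hmax))
  rw [← d.repr_bar_of_length_le hmax, hx]

lemma repr_C_mem_supported_Iio {y z : W} (h : z ≠ y) :
    d.T.repr (d.C y) z ∈ supported ℤ ℤ (Set.Iio 0) :=
  fun γ hγ => d.C_lt y z h γ hγ

lemma repr_C_mem_supported_Iic (y z : W) : d.T.repr (d.C y) z ∈ supported ℤ ℤ (Set.Iic 0) := by
  rcases eq_or_ne z y with rfl | h
  · rw [d.C_diag, ← vv_zero]
    exact vv_mem_supported le_rfl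
  · exact supported_mono Set.Iio_subset_Iic_self (d.repr_C_mem_supported_Iio h)

lemma bar_mul_T_simple_sub_smul {h : H} (hh : d.bar h = h) (i : B) :
    d.bar (h * d.T (cs.simple i) - vv (p i) • h) = h * d.T (cs.simple i) - vv (p i) • h := by
  rw [map_sub, map_mul, hh, d.bar_T, d.bar_smul, hh, barA_vv, mul_add, mul_smul_comm, mul_one,
    sub_smul]
  abel

lemma C_mul_T_simple {y : W} {i : B} (hy : cs.IsRightDescent y i) :
    d.C y * d.T (cs.simple i) = vv (p i) • d.C y := by
  rw [← sub_eq_zero]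
  set D := d.C y * d.T (cs.simple i) - vv (p i) • d.C y
  set c := d.T.repr (d.C y)
  have hcoef (z : W) : d.T.repr D z = c (z * cs.simple i) +
      (if cs.IsRightDescent z i then vv (p i) - vv (-p i) else 0) * c z - vv (p i) * c z := by
    rw [map_sub, Finsupp.sub_apply, d.repr_mul_T_simple, map_smul, Finsupp.smul_apply, smul_eq_mul]
  refine d.eq_zero_of_bar_eq_self (d.bar_mul_T_simple_sub_smul (d.bar_C y) i) fun z hmax => ?_
  by_cases hz : cs.IsRightDescent z i
  · have hDz : d.T.repr D z = c (z * cs.simple i) - c z * vv (-p i) := by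
      rw [hcoef, if_pos hz]
      ring
    have hzy : z * cs.simple i ≠ y := fun h =>
      cs.isRightDescent_iff_not_isRightDescent_mul.mp hz (h ▸ hy)
    have hcv : c z * vv (-p i) ∈ supported ℤ ℤ (Set.Iio 0) := by
      simpa only [add_zero] using mul_mem_supported_Iio (d.repr_C_mem_supported_Iic y z)
        (vv_mem_supported (s := Set.Iio 0) (neg_lt_zero.mpr (d.pos i)))
    rw [hDz]
    exact sub_mem (d.repr_C_mem_supported_Iio hzy) hcv
  · have hzs : d.T.repr D (z * cs.simple i) = 0 := by
      refine Finsupp.notMem_support_iff.mp fun hmem => ?_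
      have := hmax _ hmem
      have := cs.not_isRightDescent_iff.mp hz
      omega
    have hvv : vv (p i) * vv (-p i) = (1 : AddMonoidAlgebra ℤ Γ) := by
      rw [← vv_add, add_neg_cancel, vv_zero]
    have hDz : d.T.repr D z = -vv (p i) * d.T.repr D (z * cs.simple i) := by
      rw [hcoef, hcoef, if_neg hz, if_pos (cs.isRightDescent_iff_not_isRightDescent_mul.mpr ?_),
        cs.simple_mul_simple_cancel_right]
      · linear_combination (-c (z * cs.simple i)) * hvv
      · rwa [cs.simple_mul_simple_cancel_right]
    rw [hDz, hzs, mul_zero]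
    exact zero_mem _

lemma sum_smul_C_mul_T_simple {S : Finset W} {i : B} (hS : ∀ z ∈ S, cs.IsRightDescent z i)
    (a : W → AddMonoidAlgebra ℤ Γ) :
    (∑ z ∈ S, a z • d.C z) * d.T (cs.simple i) = vv (p i) • ∑ z ∈ S, a z • d.C z := by
  rw [Finset.sum_mul, Finset.smul_sum]
  refine Finset.sum_congr rfl fun z hz => ?_
  rw [smul_mul_assoc, d.C_mul_T_simple (hS z hz), smul_comm]

lemma repr_sum_smul_C_mem_supported_Iio {K : Finset W} {a : W → AddMonoidAlgebra ℤ Γ} {β : Γ}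
    (ha : ∀ z ∈ K, a z ∈ supported ℤ ℤ (Set.Iic β)) {u : W} (hu : u ∉ K) :
    d.T.repr (∑ z ∈ K, a z • d.C z) u ∈ supported ℤ ℤ (Set.Iio β) := by
  rw [map_sum, Finsupp.finsetSum_apply]
  refine Submodule.sum_mem _ fun z hz => ?_
  rw [map_smul, Finsupp.smul_apply, smul_eq_mul]
  simpa only [add_zero] using mul_mem_supported_Iio (ha z hz)
    (d.repr_C_mem_supported_Iio (fun (h : u = z) => hu (h ▸ hz)))

lemma eq_zero_of_sum_smul_C_mul_T_simple {K : Finset W} {i : B}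
    (hK : ∀ z ∈ K, ¬ cs.IsRightDescent z i) (a : W → AddMonoidAlgebra ℤ Γ)
    (hg : (∑ z ∈ K, a z • d.C z) * d.T (cs.simple i) = vv (p i) • ∑ z ∈ K, a z • d.C z)
    {x : W} (hx : x ∈ K) : a x = 0 := by
  classical
  set g := ∑ z ∈ K, a z • d.C z with hgK
  by_contra hax
  have hne : (K.sigma fun z => (a z).coeff.support).Nonempty := by
    obtain ⟨γ, hγ⟩ := Finsupp.support_nonempty_iff.mpr (mt coeff_eq_zero.mp hax)
    exact ⟨⟨x, γ⟩, Finset.mem_sigma.mpr ⟨hx, hγ⟩⟩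
  obtain ⟨⟨x₁, β⟩, hmem, hmax⟩ := Finset.exists_max_image _ (fun q => q.2) hne
  obtain ⟨hx₁K, hβ⟩ := Finset.mem_sigma.mp hmem
  have haβ (z : W) (hz : z ∈ K) : a z ∈ supported ℤ ℤ (Set.Iic β) :=
    fun γ hγ => hmax ⟨z, γ⟩ (Finset.mem_sigma.mpr ⟨hz, hγ⟩)
  have hgx₁ : d.T.repr g x₁ = vv (-p i) * d.T.repr g (x₁ * cs.simple i) := by
    have := congrArg (d.T.repr · x₁) hg
    simp only [d.repr_mul_T_simple, if_neg (hK x₁ hx₁K), zero_mul, add_zero, map_smul,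
      Finsupp.smul_apply, smul_eq_mul] at this
    rw [this, ← mul_assoc, ← vv_add, neg_add_cancel, vv_zero, one_mul]
  have hx₁s : x₁ * cs.simple i ∉ K := fun h => hK _ h
    (cs.isRightDescent_iff_not_isRightDescent_mul.mpr
      (by rw [cs.simple_mul_simple_cancel_right]; exact hK x₁ hx₁K))
  have hgβ : d.T.repr g x₁ ∈ supported ℤ ℤ (Set.Iio β) := by
    rw [hgx₁]
    simpa only [zero_add] using mul_mem_supported_Iio
      (vv_mem_supported (s := Set.Iic 0) (neg_nonpos.mpr (d.pos i).le))
      (d.repr_sum_smul_C_mem_supported_Iio haβ hx₁s)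
  have hsplit : a x₁ = d.T.repr g x₁ - d.T.repr (∑ z ∈ K.erase x₁, a z • d.C z) x₁ := by
    rw [hgK, ← Finset.add_sum_erase K _ hx₁K, map_add, Finsupp.add_apply, map_smul,
      Finsupp.smul_apply, d.C_diag, smul_eq_mul, mul_one, add_sub_cancel_right]
  have hax₁ : a x₁ ∈ supported ℤ ℤ (Set.Iio β) := hsplit ▸ sub_mem hgβ
    (d.repr_sum_smul_C_mem_supported_Iio (fun z hz => haβ z (Finset.mem_of_mem_erase hz))
      (Finset.notMem_erase x₁ K))
  exact lt_irrefl β (hax₁ hβ)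

lemma isRightDescent_of_C_repr_ne_zero {h : H} {i : B}
    (hh : h * d.T (cs.simple i) = vv (p i) • h) {x : W} (hx : d.C.repr h x ≠ 0) :
    cs.IsRightDescent x i := by
  set b := d.C.repr h
  set e := ∑ z ∈ b.support.filter (cs.IsRightDescent · i), b z • d.C z
  set g := ∑ z ∈ b.support.filter (¬ cs.IsRightDescent · i), b z • d.C z
  have hge : g = h - e := by
    rw [eq_sub_iff_add_eq, add_comm, Finset.sum_filter_add_sum_filter_not]
    conv_rhs => rw [← d.C.linearCombination_repr h]
    rfl
  have hg : g * d.T (cs.simple i) = vv (p i) • g := by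
    rw [hge, sub_mul, hh, d.sum_smul_C_mul_T_simple (fun z hz => (Finset.mem_filter.mp hz).2),
      smul_sub]
  by_contra hxi
  exact hx (d.eq_zero_of_sum_smul_C_mul_T_simple (fun z hz => (Finset.mem_filter.mp hz).2) b hg
    (Finset.mem_filter.mpr ⟨Finsupp.mem_support_iff.mpr hx, hxi⟩))

lemma rightDescent_subset_of_leftStep {x y : W} (h : d.leftStep x y) :
    {i : B | cs.IsRightDescent y i} ⊆ {i : B | cs.IsRightDescent x i} := by
  obtain ⟨j, hj⟩ := h
  intro i hi
  refine d.isRightDescent_of_C_repr_ne_zero ?_ hj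
  rw [mul_assoc, d.C_mul_T_simple hi, mul_smul_comm]

lemma rightDescent_subset_of_leftLe {x y : W} (h : d.LeftLe x y) :
    {i : B | cs.IsRightDescent y i} ⊆ {i : B | cs.IsRightDescent x i} := by
  induction h with
  | refl => exact subset_rfl
  | tail _ hstep ih => exact (d.rightDescent_subset_of_leftStep hstep).trans ih

lemma rightDescent_eq_of_leftEquiv {x y : W} (h : d.LeftEquiv x y) :
    {i : B | cs.IsRightDescent x i} = {i : B | cs.IsRightDescent y i} :=
  (d.rightDescent_subset_of_leftLe h.2).antisymm (d.rightDescent_subset_of_leftLe h.1)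

end KLHecke

/-- If `x ≤_L y` then `R(y) ⊆ R(x)`, where `R(w)` is the right descent set of `w`.
Consequently `x ∼_L y` implies `R(x) = R(y)`, and for each `I ⊆ S` the set
`{w | R(w) = I}` is a union of left cells. -/
theorem stmt10 {B W : Type*} [Group W] {M : CoxeterMatrix B}
    (cs : CoxeterSystem M W) {Γ : Type*} [AddCommGroup Γ] [LinearOrder Γ] [IsOrderedAddMonoid Γ]
    (p : B → Γ) (H : Type*) [Ring H] [Algebra (AddMonoidAlgebra ℤ Γ) H]
    (d : KLHecke cs Γ p H) :
    (∀ x y : W, d.LeftLe x y →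
      {i : B | cs.IsRightDescent y i} ⊆ {i : B | cs.IsRightDescent x i}) ∧
    (∀ x y : W, d.LeftEquiv x y →
      {i : B | cs.IsRightDescent x i} = {i : B | cs.IsRightDescent y i}) ∧
    ∀ (I : Set B) (x y : W), {i : B | cs.IsRightDescent x i} = I →
      d.LeftEquiv x y → {i : B | cs.IsRightDescent y i} = I := by
  refine ⟨fun _ _ => d.rightDescent_subset_of_leftLe, fun _ _ => d.rightDescent_eq_of_leftEquiv, ?_⟩
  rintro I x y rfl hxy
  exact (d.rightDescent_eq_of_leftEquiv hxy).symm
end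

section
/- Let W be a dihedral Coxeter group with S = {s,t}, st of finite order m, and σ the unique automorphism of W exchanging s and t. Define δ(w) = w if w ∈ {1, w₀} and δ(w) = σ(w)·w₀ otherwise, where w₀ is the longest element. Then δ is an involution of W; if m is odd, δ exchanges Γ_s = {w | ws<w, wt>w} and Γ_t = {w | ws>w, wt<w}, and if m is even, δ maps each of Γ_s and Γ_t onto itself. -/
/-!
Put `w₀ = s t s ⋯` (`m` factors). Every `w ∈ W` is an alternating product with `ℓ(w)` factors
(peel off left descents), and alternating products with fewer than `2m` factors are pairwise
distinct: the length parity separates the two parities, and the powers `(st)^k`, `k < m`, are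
distinct. Hence `ℓ(w) ≤ m`, `ℓ(w₀) = m`, and `ℓ(y w₀) = m - ℓ(y)` for all `y`. So the right
descent set of `x w₀` is the complement of that of `x`, transported by `u ↦ w₀ u w₀`, which fixes
`s` and `t` for `m` even and swaps them for `m` odd. As `σ` swaps `s` and `t` as well, for
`w ∉ {1, w₀}` the descent set of `δ(w) = σ(w) w₀` is the complement of that of `w`, swapped when
`m` is even and unchanged when `m` is odd, which maps `Γ_s` to `Γ_s`, resp. `Γ_t`. The fixed
points `1` and `w₀` of `δ` lie in neither set.
-/

open CoxeterSystem

/-- The alternating product `s_i s_j s_i ⋯` with `k` factors, starting with `s_i`. -/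
def altP {B W : Type*} [Group W] {M : CoxeterMatrix B} (cs : CoxeterSystem M W)
    (i j : B) : ℕ → W
  | 0 => 1
  | (k + 1) => altP cs i j k * (if Even k then cs.simple i else cs.simple j)

open Function Set

namespace CoxeterSystem

variable {B W : Type*} [Group W] {M : CoxeterMatrix B} (cs : CoxeterSystem M W)

local prefix:100 "s" => cs.simple
local prefix:100 "ℓ" => cs.length

def IsLongest (w₀ : W) : Prop := ∀ y, ℓ (y * w₀) + ℓ y = ℓ w₀

namespace IsLongest

variable {cs} {w₀ : W}

theorem mul_self (h : cs.IsLongest w₀) : w₀ * w₀ = 1 :=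
  cs.length_eq_zero_iff.mp (by have := h w₀; omega)

theorem isRightDescent (h : cs.IsLongest w₀) (b : B) : cs.IsRightDescent w₀ b := by
  have hinv : w₀⁻¹ = w₀ := inv_eq_of_mul_eq_one_right h.mul_self
  have := h (s b)
  rw [IsRightDescent, ← length_inv, mul_inv_rev, inv_simple, hinv]
  rw [length_simple] at this
  omega

theorem isRightDescent_mul_iff (h : cs.IsLongest w₀) {b b' : B} (hb : s b * w₀ = w₀ * s b')
    (x : W) : cs.IsRightDescent (x * w₀) b' ↔ ¬ cs.IsRightDescent x b := by
  have hx := h x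
  have hxb := h (x * s b)
  rw [mul_assoc, hb, ← mul_assoc] at hxb
  have := cs.length_mul_simple_ne x b
  rw [IsRightDescent, IsRightDescent]
  omega

end IsLongest

def longestTwist [DecidableEq W] (σ : W → W) (w₀ w : W) : W :=
  if w = 1 ∨ w = w₀ then w else σ w * w₀

theorem involutive_longestTwist [DecidableEq W] {σ : W ≃* W} {w₀ : W} (hσ : Involutive σ)
    (hσw₀ : σ w₀ = w₀) (hw₀ : w₀ * w₀ = 1) : Involutive (longestTwist σ w₀) := by
  intro w
  by_cases hw : w = 1 ∨ w = w₀
  · simp only [longestTwist, if_pos hw]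
  have hσw : ¬(σ w * w₀ = 1 ∨ σ w * w₀ = w₀) := by
    rintro (h | h)
    · refine hw (Or.inr (σ.injective ?_))
      rw [hσw₀, mul_eq_one_iff_eq_inv.mp h, inv_eq_of_mul_eq_one_right hw₀]
    · exact hw (Or.inl (σ.injective (by rw [mul_eq_right.mp h, map_one])))
  simp only [longestTwist, if_neg hw, if_neg hσw, map_mul, hσ w, hσw₀, mul_assoc, hw₀,
    mul_one]

theorem preimage_longestTwist [DecidableEq W] {w₀ : W} (h : cs.IsLongest w₀) {σ : W → W}
    {x y x' y' : B} (hx : s x * w₀ = w₀ * s x') (hy : s y * w₀ = w₀ * s y')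
    (hσx : ∀ w, cs.IsRightDescent (σ w) x ↔ cs.IsRightDescent w y)
    (hσy : ∀ w, cs.IsRightDescent (σ w) y ↔ cs.IsRightDescent w x) :
    longestTwist σ w₀ ⁻¹' {w | cs.IsRightDescent w x' ∧ ¬ cs.IsRightDescent w y'} =
      {w | cs.IsRightDescent w x ∧ ¬ cs.IsRightDescent w y} := by
  ext w
  by_cases hw : w = 1 ∨ w = w₀
  · simp only [mem_preimage, longestTwist, if_pos hw, mem_ofPred_eq]
    rcases hw with rfl | rfl
    · simp [cs.not_isRightDescent_one]
    · simp [h.isRightDescent]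
  · simp only [mem_preimage, longestTwist, if_neg hw, mem_ofPred_eq, h.isRightDescent_mul_iff hx,
      h.isRightDescent_mul_iff hy, hσx, hσy]
    tauto

end CoxeterSystem

section Dihedral

variable {B W : Type*} [Group W] {M : CoxeterMatrix B} (cs : CoxeterSystem M W) (i j : B)

local prefix:100 "s" => cs.simple
local prefix:100 "ℓ" => cs.length

theorem altP_succ_eq_simple_mul (k : ℕ) : altP cs i j (k + 1) = s i * altP cs j i k := by
  induction k with
  | zero => simp [altP]
  | succ k ih =>
    rw [altP, ih, altP, mul_assoc]
    by_cases hk : Even k <;> simp [Nat.even_add_one, hk]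

theorem altP_eq_pow_mul (k : ℕ) :
    altP cs i j k = (s i * s j) ^ (k / 2) * (if Even k then 1 else s i) := by
  induction k with
  | zero => simp [altP]
  | succ k ih =>
    rw [altP, ih]
    obtain ⟨l, rfl | rfl⟩ := Nat.even_or_odd' k
    · simp [show (2 * l + 1) / 2 = l by omega]
    · simp [Nat.even_add_one, show (2 * l + 1) / 2 = l by omega,
        show (2 * l + 1 + 1) / 2 = l + 1 by omega, pow_succ, mul_assoc]

theorem altP_braid {m : ℕ} (h : (s i * s j) ^ m = 1) : altP cs i j m = altP cs j i m := by
  have hji : s j * s i = (s i * s j)⁻¹ := by simp [mul_inv_rev]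
  rw [altP_eq_pow_mul, altP_eq_pow_mul, hji, inv_pow]
  obtain ⟨l, rfl | rfl⟩ := Nat.even_or_odd' m
  · simp only [show 2 * l / 2 = l by omega, even_two_mul, if_true, mul_one]
    rw [eq_inv_iff_mul_eq_one, ← pow_add, ← two_mul, h]
  · have hodd : ¬ Even (2 * l + 1) := by simp
    have hP : (s i * s j) ^ (l + l) * s i * s j = 1 := by
      rw [mul_assoc, ← pow_succ, ← two_mul, h]
    rw [show (2 * l + 1) / 2 = l by omega, if_neg hodd, if_neg hodd, eq_inv_mul_iff_mul_eq,
      ← mul_assoc, ← pow_add, ← mul_inv_eq_one, cs.inv_simple, hP]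

theorem length_altP_mod_two (k : ℕ) : ℓ (altP cs i j k) % 2 = k % 2 := by
  induction k with
  | zero => simp [altP]
  | succ k ih =>
    rw [altP, cs.length_mul_mod_two, Nat.add_mod, ih, apply_ite cs.length]
    simp [Nat.add_mod]

theorem altP_injOn {m : ℕ} (hm : orderOf (s i * s j) = m) :
    InjOn (altP cs i j) (Iio (2 * m)) := by
  intro k hk k' hk' h
  have hmod : k % 2 = k' % 2 := by
    rw [← length_altP_mod_two cs i j k, ← length_altP_mod_two cs i j k', h]
  have hpar : Even k ↔ Even k' := by simp only [Nat.even_iff, hmod]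
  rw [altP_eq_pow_mul, altP_eq_pow_mul] at h
  simp only [hpar, mul_left_inj] at h
  have := pow_injOn_Iio_orderOf (x := s i * s j) (by simp only [mem_Iio, hm] at hk ⊢; omega)
    (by simp only [mem_Iio, hm] at hk' ⊢; omega) h
  omega

theorem length_inv_altP_mul_altP_le {k n : ℕ} (hkn : k ≤ n) :
    ℓ ((altP cs i j k)⁻¹ * altP cs i j n) ≤ n - k := by
  induction n, hkn using Nat.le_induction with
  | base => simp
  | succ n hkn ih =>
    rw [altP, ← mul_assoc]
    refine (cs.length_mul_le _ _).trans ?_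
    split_ifs <;> simp only [length_simple] <;> omega

theorem length_altP_le (k : ℕ) : ℓ (altP cs i j k) ≤ k := by
  simpa [altP] using length_inv_altP_mul_altP_le cs i j (Nat.zero_le k)

theorem eq_altP_succ_of_simple_mul {w : W} {n : ℕ} (hw : ℓ w = n + 1)
    (h : s i * w = altP cs i j n ∨ s i * w = altP cs j i n) : w = altP cs i j (n + 1) := by
  rcases h with h | h
  · cases n with
    | zero =>
      rw [altP] at h
      simp [altP, eq_inv_of_mul_eq_one_right h]
    | succ n =>
      rw [altP_succ_eq_simple_mul, mul_right_inj] at h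
      have := length_altP_le cs j i n
      rw [← h] at this
      omega
  · rw [altP_succ_eq_simple_mul, ← h, cs.simple_mul_simple_cancel_left]

theorem eq_altP_length (hall : ∀ b : B, b = i ∨ b = j) (w : W) :
    w = altP cs i j (ℓ w) ∨ w = altP cs j i (ℓ w) := by
  suffices ∀ n w, ℓ w = n → w = altP cs i j n ∨ w = altP cs j i n from this _ w rfl
  intro n
  induction n with
  | zero => simp [altP, cs.length_eq_zero_iff]
  | succ n ih =>
    intro w hw
    obtain ⟨b, hb⟩ := cs.exists_leftDescent_of_ne_one (w := w) (by rintro rfl; simp at hw)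
    have hbw := ih (s b * w) (by rw [cs.isLeftDescent_iff] at hb; omega)
    rcases hall b with rfl | rfl
    · exact Or.inl (eq_altP_succ_of_simple_mul cs b j hw hbw)
    · exact Or.inr (eq_altP_succ_of_simple_mul cs b i hw hbw.symm)

theorem length_altP_lt {m n : ℕ} (hbraid : altP cs i j m = altP cs j i m) (hm : m ≠ 0)
    (hn : m < n) : ℓ (altP cs i j n) < n := by
  have hfold : altP cs i j (m + 1) = altP cs j i (m - 1) := by
    obtain ⟨k, rfl⟩ := Nat.exists_eq_add_one_of_ne_zero hm
    rw [altP_succ_eq_simple_mul, ← hbraid, altP_succ_eq_simple_mul,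
      cs.simple_mul_simple_cancel_left, Nat.add_sub_cancel]
  calc ℓ (altP cs i j n)
      = ℓ (altP cs i j (m + 1) * ((altP cs i j (m + 1))⁻¹ * altP cs i j n)) := by
        rw [mul_inv_cancel_left]
    _ ≤ ℓ (altP cs j i (m - 1)) + (n - (m + 1)) := by
        rw [← hfold]
        exact (cs.length_mul_le _ _).trans
          (by gcongr; exact length_inv_altP_mul_altP_le cs i j hn)
    _ < n := by have := length_altP_le cs j i (m - 1); omega

theorem length_le_of_altP_braid (hall : ∀ b : B, b = i ∨ b = j) {m : ℕ}
    (hbraid : altP cs i j m = altP cs j i m) (hm : m ≠ 0) (w : W) : ℓ w ≤ m := by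
  by_contra! hlt
  rcases eq_altP_length cs i j hall w with h | h
  · have := length_altP_lt cs i j hbraid hm hlt
    rw [← h] at this
    omega
  · have := length_altP_lt cs j i hbraid.symm hm hlt
    rw [← h] at this
    omega

theorem orderOf_simple_mul_simple_comm : orderOf (s j * s i) = orderOf (s i * s j) := by
  rw [← orderOf_inv, mul_inv_rev, cs.inv_simple, cs.inv_simple]

theorem length_altP_of_orderOf_eq (hall : ∀ b : B, b = i ∨ b = j) {m : ℕ}
    (hm : orderOf (s i * s j) = m) (hm0 : m ≠ 0) : ℓ (altP cs i j m) = m := by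
  have hbraid := altP_braid cs i j (hm ▸ pow_orderOf_eq_one _)
  obtain ⟨n, hn⟩ : ∃ n, ℓ (altP cs i j m) = n := ⟨_, rfl⟩
  have hnm : n < 2 * m := by have := length_altP_le cs i j m; omega
  rw [hn]
  rcases eq_altP_length cs i j hall (altP cs i j m) with h | h <;> rw [hn] at h
  · exact altP_injOn cs i j hm hnm (by simp only [mem_Iio]; omega) h.symm
  · rw [hbraid] at h
    exact altP_injOn cs j i ((orderOf_simple_mul_simple_comm cs i j).trans hm) hnm
      (by simp only [mem_Iio]; omega) h.symm

theorem isLongest_altP (hall : ∀ b : B, b = i ∨ b = j) {m : ℕ} (hm : orderOf (s i * s j) = m)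
    (hm0 : m ≠ 0) : cs.IsLongest (altP cs i j m) := by
  intro y
  have hbraid := altP_braid cs i j (hm ▸ pow_orderOf_eq_one _)
  have hlen := length_altP_of_orderOf_eq cs i j hall hm hm0
  refine le_antisymm ?_ (cs.length_le_length_mul_add_left y _)
  have hy := length_le_of_altP_braid cs i j hall hbraid hm0 y
  rw [hlen]
  rcases eq_altP_length cs i j hall y⁻¹ with h | h <;>
    rw [cs.length_inv, inv_eq_iff_eq_inv] at h
  · have := length_inv_altP_mul_altP_le cs i j hy
    rw [← h] at this
    omega
  · have := length_inv_altP_mul_altP_le cs j i hy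
    rw [← hbraid, ← h] at this
    omega

theorem simple_mul_altP_of_braid {m : ℕ} (hbraid : altP cs i j m = altP cs j i m) (hm : m ≠ 0) :
    s i * altP cs i j m = altP cs i j m * s (if Even m then i else j) := by
  obtain ⟨k, rfl⟩ := Nat.exists_eq_add_one_of_ne_zero hm
  calc s i * altP cs i j (k + 1) = altP cs j i k := by
        rw [altP_succ_eq_simple_mul, cs.simple_mul_simple_cancel_left]
    _ = altP cs j i (k + 1) * s (if Even (k + 1) then i else j) := by
        rw [altP]
        by_cases hk : Even k <;> simp [Nat.even_add_one, hk]
    _ = altP cs i j (k + 1) * s (if Even (k + 1) then i else j) := by rw [hbraid]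

section Swap

variable {F : Type*} [FunLike F W W] [MonoidHomClass F W W] {f : F}

theorem map_altP (hi : f (s i) = s j) (hj : f (s j) = s i) (k : ℕ) :
    f (altP cs i j k) = altP cs j i k := by
  induction k with
  | zero => simp [altP]
  | succ k ih => simp [altP, ih, apply_ite f, hi, hj]

theorem map_map_of_swap (hall : ∀ b : B, b = i ∨ b = j) (hi : f (s i) = s j)
    (hj : f (s j) = s i) (w : W) : f (f w) = w := by
  rcases eq_altP_length cs i j hall w with h | h <;> rw [h]
  · rw [map_altP cs i j hi hj, map_altP cs j i hj hi]
  · rw [map_altP cs j i hj hi, map_altP cs i j hi hj]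

theorem length_map_of_swap (hall : ∀ b : B, b = i ∨ b = j) (hi : f (s i) = s j)
    (hj : f (s j) = s i) (w : W) : ℓ (f w) = ℓ w := by
  have hle : ∀ w, ℓ (f w) ≤ ℓ w := by
    intro w
    rcases eq_altP_length cs i j hall w with h | h <;> nth_rewrite 1 [h]
    · rw [map_altP cs i j hi hj]
      exact length_altP_le cs j i _
    · rw [map_altP cs j i hj hi]
      exact length_altP_le cs i j _
  refine le_antisymm (hle w) ?_
  simpa only [map_map_of_swap cs i j hall hi hj] using hle (f w)

theorem isRightDescent_map_iff_of_swap (hall : ∀ b : B, b = i ∨ b = j) (hi : f (s i) = s j)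
    (hj : f (s j) = s i) (w : W) : cs.IsRightDescent (f w) i ↔ cs.IsRightDescent w j := by
  rw [IsRightDescent, IsRightDescent, ← hj, ← map_mul, length_map_of_swap cs i j hall hi hj,
    length_map_of_swap cs i j hall hi hj]

end Swap

end Dihedral

theorem stmt16_general {B W : Type*} [Group W] [DecidableEq W] {M : CoxeterMatrix B}
    (cs : CoxeterSystem M W) (i j : B) (hall : ∀ b : B, b = i ∨ b = j)
    (m : ℕ) (hm2 : 2 ≤ m) (hm : orderOf (cs.simple i * cs.simple j) = m)
    (σ : W ≃* W) (hσs : σ (cs.simple i) = cs.simple j)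
    (hσt : σ (cs.simple j) = cs.simple i) :
    (∀ w : W,
      (fun w : W => if w = 1 ∨ w = altP cs i j m then w else σ w * altP cs i j m)
        ((fun w : W =>
          if w = 1 ∨ w = altP cs i j m then w else σ w * altP cs i j m) w) = w) ∧
    (Odd m →
      (fun w : W => if w = 1 ∨ w = altP cs i j m then w else σ w * altP cs i j m) ''
          {w : W | cs.IsRightDescent w i ∧ ¬ cs.IsRightDescent w j} =
        {w : W | ¬ cs.IsRightDescent w i ∧ cs.IsRightDescent w j} ∧
      (fun w : W => if w = 1 ∨ w = altP cs i j m then w else σ w * altP cs i j m) ''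
          {w : W | ¬ cs.IsRightDescent w i ∧ cs.IsRightDescent w j} =
        {w : W | cs.IsRightDescent w i ∧ ¬ cs.IsRightDescent w j}) ∧
    (Even m →
      (fun w : W => if w = 1 ∨ w = altP cs i j m then w else σ w * altP cs i j m) ''
          {w : W | cs.IsRightDescent w i ∧ ¬ cs.IsRightDescent w j} =
        {w : W | cs.IsRightDescent w i ∧ ¬ cs.IsRightDescent w j} ∧
      (fun w : W => if w = 1 ∨ w = altP cs i j m then w else σ w * altP cs i j m) ''
          {w : W | ¬ cs.IsRightDescent w i ∧ cs.IsRightDescent w j} =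
        {w : W | ¬ cs.IsRightDescent w i ∧ cs.IsRightDescent w j}) := by
  have hm0 : m ≠ 0 := by omega
  have hbraid := altP_braid cs i j (hm ▸ pow_orderOf_eq_one _)
  have hlong := isLongest_altP cs i j hall hm hm0
  have hσ : Involutive σ := map_map_of_swap cs i j hall hσs hσt
  have hδ : Involutive (longestTwist σ (altP cs i j m)) := involutive_longestTwist hσ
    (by rw [map_altP cs i j hσs hσt, hbraid]) hlong.mul_self
  have hi := simple_mul_altP_of_braid cs i j hbraid hm0
  have hj := simple_mul_altP_of_braid cs j i hbraid.symm hm0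
  rw [← hbraid] at hj
  have hσi := isRightDescent_map_iff_of_swap cs i j hall hσs hσt
  have hσj := isRightDescent_map_iff_of_swap cs j i (fun b => (hall b).symm) hσt hσs
  have hΓt : {w | ¬ cs.IsRightDescent w i ∧ cs.IsRightDescent w j} =
      {w | cs.IsRightDescent w j ∧ ¬ cs.IsRightDescent w i} := Set.ext fun _ => and_comm
  rw [show (fun w : W => if w = 1 ∨ w = altP cs i j m then w else σ w * altP cs i j m) =
    longestTwist σ (altP cs i j m) from rfl, hδ.image_eq_preimage_symm, hΓt]
  refine ⟨hδ, fun hodd => ?_, fun heven => ?_⟩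
  · rw [← Nat.not_even_iff_odd] at hodd
    simp only [hodd, if_false] at hi hj
    exact ⟨preimage_longestTwist cs hlong hj hi hσj hσi,
      preimage_longestTwist cs hlong hi hj hσi hσj⟩
  · simp only [heven, if_true] at hi hj
    exact ⟨preimage_longestTwist cs hlong hi hj hσi hσj,
      preimage_longestTwist cs hlong hj hi hσj hσi⟩

/-- Let `W` be a dihedral Coxeter group with `S = {s,t}` (`s = s_i`, `t = s_j`), `st`
of finite order `m`, and `σ` the automorphism of `W` exchanging `s` and `t`.  Define
`δ(w) = w` if `w ∈ {1, w₀}` and `δ(w) = σ(w)·w₀` otherwise, where `w₀ = stst⋯`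
(`m` factors) is the longest element.  Then `δ` is an involution of `W`; if `m` is odd,
`δ` exchanges `Γ_s = {w | ws < w, wt > w}` and `Γ_t = {w | ws > w, wt < w}`, and if `m`
is even, `δ` maps each of `Γ_s`, `Γ_t` onto itself. -/
theorem stmt16 {B W : Type*} [Group W] [DecidableEq W] {M : CoxeterMatrix B}
    (cs : CoxeterSystem M W) (i j : B) (hij : i ≠ j) (hall : ∀ b : B, b = i ∨ b = j)
    (m : ℕ) (hm2 : 2 ≤ m) (hm : orderOf (cs.simple i * cs.simple j) = m)
    (σ : W ≃* W) (hσs : σ (cs.simple i) = cs.simple j)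
    (hσt : σ (cs.simple j) = cs.simple i) :
    (∀ w : W,
      (fun w : W => if w = 1 ∨ w = altP cs i j m then w else σ w * altP cs i j m)
        ((fun w : W =>
          if w = 1 ∨ w = altP cs i j m then w else σ w * altP cs i j m) w) = w) ∧
    (Odd m →
      (fun w : W => if w = 1 ∨ w = altP cs i j m then w else σ w * altP cs i j m) ''
          {w : W | cs.IsRightDescent w i ∧ ¬ cs.IsRightDescent w j} =
        {w : W | ¬ cs.IsRightDescent w i ∧ cs.IsRightDescent w j} ∧
      (fun w : W => if w = 1 ∨ w = altP cs i j m then w else σ w * altP cs i j m) ''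
          {w : W | ¬ cs.IsRightDescent w i ∧ cs.IsRightDescent w j} =
        {w : W | cs.IsRightDescent w i ∧ ¬ cs.IsRightDescent w j}) ∧
    (Even m →
      (fun w : W => if w = 1 ∨ w = altP cs i j m then w else σ w * altP cs i j m) ''
          {w : W | cs.IsRightDescent w i ∧ ¬ cs.IsRightDescent w j} =
        {w : W | cs.IsRightDescent w i ∧ ¬ cs.IsRightDescent w j} ∧
      (fun w : W => if w = 1 ∨ w = altP cs i j m then w else σ w * altP cs i j m) ''
          {w : W | ¬ cs.IsRightDescent w i ∧ cs.IsRightDescent w j} =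
        {w : W | ¬ cs.IsRightDescent w i ∧ cs.IsRightDescent w j}) :=
  stmt16_general cs i j hall m hm2 hm σ hσs hσt
end

section
/- Let (W,S) be a Coxeter system, I ⊆ S, and suppose (by the induction theorem for cells) that x ≤_L y in W implies pr_I(x) ≤_{L,I} pr_I(y) in W_I. Then for every left cell Γ of W_I, the set X_I·Γ = {xu | x ∈ X_I, u ∈ Γ} is left-closed in W, i.e., for all a,b ∈ X_I·Γ, {z ∈ W | a ≤_L z ≤_L b} ⊆ X_I·Γ; in particular X_I·Γ is a union of left cells of W. -/
/-!
Every `w ∈ W` factors uniquely as `w = x u` with `x ∈ X_I` and `u ∈ W_I`, so `pr_I` is forced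
and `X_I·Γ = pr_I⁻¹(Γ)`; left-closedness of this preimage follows from the induction theorem and
transitivity of `≤_{L,I}`.

Uniqueness of the factorisation: if `x` has minimal length in `x W_I` and `1 ≠ v ∈ W_I`, write
`v` as a shortest word `σ i` in `I`; by the exchange condition `x σ` has no descent `i`, so `x v`
does. Hence elements of `X_I` are minimal in their coset and `x v ∈ X_I` forces `v = 1`.
The exchange condition comes from Tits' action of `W` on `W × ℤ/2` by twisted conjugation, which
shows that the parity of the number of occurrences of a reflection in the right inversion sequence
of a word only depends on the product of the word.
-/

section TwistedConj

variable {G : Type*} [Group G]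

lemma conj_eq_iff_eq_conj {g t c : G} : g * t * g⁻¹ = c ↔ t = g⁻¹ * c * g := by
  constructor <;> rintro rfl <;> group

lemma inv_pow_mul_eq_mul_pow {a b : G} (ha : a * a = 1) (hb : b * b = 1) (k : ℕ) :
    ((a * b) ^ k)⁻¹ * b = b * (a * b) ^ k := by
  have hconj : b * (a * b) * b⁻¹ = (a * b)⁻¹ := by
    rw [mul_inv_rev, inv_eq_of_mul_eq_one_left ha, inv_eq_of_mul_eq_one_left hb]
    simp [mul_assoc, hb]
  calc ((a * b) ^ k)⁻¹ * b = (b * (a * b) * b⁻¹) ^ k * b := by rw [hconj, inv_pow]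
    _ = b * (a * b) ^ k := by rw [conj_pow]; group

variable [DecidableEq G]

def twistedConj (a : G) : Equiv.Perm (G × ZMod 2) where
  toFun p := (a * p.1 * a⁻¹, p.2 + if p.1 = a then 1 else 0)
  invFun p := (a⁻¹ * p.1 * a, p.2 + if p.1 = a then 1 else 0)
  left_inv := by
    rintro ⟨t, z⟩
    have h : a * t * a⁻¹ = a ↔ t = a := by rw [mul_inv_eq_iff_eq_mul, mul_right_inj]
    ext
    · simp [mul_assoc]
    · simp only [h, add_assoc, CharTwo.add_self_eq_zero, add_zero]
  right_inv := by
    rintro ⟨t, z⟩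
    have h : a⁻¹ * t * a = a ↔ t = a := by
      rw [mul_assoc, inv_mul_eq_iff_eq_mul, mul_left_inj]
    ext
    · simp [mul_assoc]
    · simp only [h, add_assoc, CharTwo.add_self_eq_zero, add_zero]

lemma twistedConj_apply (a t : G) (z : ZMod 2) :
    twistedConj a (t, z) = (a * t * a⁻¹, z + if t = a then 1 else 0) := rfl

lemma twistedConj_mul_pow_apply {a b : G} (ha : a * a = 1) (hb : b * b = 1) (k : ℕ)
    (t : G) (z : ZMod 2) :
    ((twistedConj a * twistedConj b) ^ k) (t, z) =
      ((a * b) ^ k * t * ((a * b) ^ k)⁻¹,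
        z + ∑ q ∈ Finset.range (2 * k), if t = b * (a * b) ^ q then 1 else 0) := by
  induction k with
  | zero => simp
  | succ k ih =>
    have h₁ : (a * b) ^ k * t * ((a * b) ^ k)⁻¹ = b ↔ t = b * (a * b) ^ (2 * k) := by
      rw [conj_eq_iff_eq_conj, inv_pow_mul_eq_mul_pow ha hb, mul_assoc, ← pow_add, two_mul]
    have h₂ : b * ((a * b) ^ k * t * ((a * b) ^ k)⁻¹) * b⁻¹ = a ↔
        t = b * (a * b) ^ (2 * k + 1) := by
      have e : ((a * b) ^ k)⁻¹ * (b⁻¹ * a * b) * (a * b) ^ k = b * (a * b) ^ (2 * k + 1) :=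
        calc ((a * b) ^ k)⁻¹ * (b⁻¹ * a * b) * (a * b) ^ k
            = ((a * b) ^ k)⁻¹ * b * ((a * b) * (a * b) ^ k) := by
              rw [inv_eq_of_mul_eq_one_left hb]; simp only [mul_assoc]
          _ = b * (a * b) ^ (2 * k + 1) := by
              rw [inv_pow_mul_eq_mul_pow ha hb, mul_assoc, ← pow_succ', ← pow_add]
              congr 2
              omega
      rw [conj_eq_iff_eq_conj, conj_eq_iff_eq_conj, e]
    rw [pow_succ', Equiv.Perm.mul_apply, ih, Equiv.Perm.mul_apply]
    refine Prod.ext ?_ ?_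
    · simp only [twistedConj_apply, pow_succ', mul_inv_rev]
      group
    · simp only [twistedConj_apply, h₁, h₂, Nat.mul_succ, Finset.sum_range_succ, add_assoc]

lemma twistedConj_mul_pow_eq_one {a b : G} (ha : a * a = 1) (hb : b * b = 1) {m : ℕ}
    (hm : (a * b) ^ m = 1) : (twistedConj a * twistedConj b) ^ m = 1 := by
  ext ⟨t, z⟩ : 1
  have hperiodic : ∀ q, (a * b) ^ (m + q) = (a * b) ^ q := by simp [pow_add, hm]
  rw [twistedConj_mul_pow_apply ha hb, two_mul, Finset.sum_range_add]
  simp [hm, hperiodic, CharTwo.add_self_eq_zero]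

end TwistedConj

namespace CoxeterSystem

variable {B W : Type*} [Group W] {M : CoxeterMatrix B} (cs : CoxeterSystem M W)

local prefix:100 "s" => cs.simple
local prefix:100 "π" => cs.wordProd
local prefix:100 "ℓ" => cs.length
local prefix:100 "ris" => cs.rightInvSeq

section ReflectionRepresentation

variable [DecidableEq W]

lemma isLiftable_twistedConj_simple : M.IsLiftable fun i ↦ twistedConj (s i) :=
  fun i j ↦ twistedConj_mul_pow_eq_one (cs.simple_mul_simple_self i)
    (cs.simple_mul_simple_self j) (cs.simple_mul_simple_pow i j)

def reflectionRep : W →* Equiv.Perm (W × ZMod 2) :=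
  cs.lift ⟨_, cs.isLiftable_twistedConj_simple⟩

lemma reflectionRep_wordProd (ω : List B) (t : W) (z : ZMod 2) :
    cs.reflectionRep (π ω) (t, z) = (π ω * t * (π ω)⁻¹, z + (ris ω).count t) := by
  induction ω generalizing z with
  | nil => simp
  | cons i ω ih =>
    have hfix : π ω * t * (π ω)⁻¹ = s i ↔ (π ω)⁻¹ * s i * π ω = t := by
      rw [conj_eq_iff_eq_conj, eq_comm]
    rw [cs.wordProd_cons, map_mul, Equiv.Perm.mul_apply, ih, reflectionRep, cs.lift_apply_simple,
      twistedConj_apply]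
    refine Prod.ext ?_ ?_
    · simp only [mul_inv_rev, cs.inv_simple, mul_assoc]
    · simp only [rightInvSeq, List.count_cons, beq_iff_eq, hfix]
      push_cast
      ring

theorem count_rightInvSeq_eq_of_wordProd_eq {ω ω' : List B} (h : π ω = π ω') (t : W) :
    ((ris ω).count t : ZMod 2) = (ris ω').count t := by
  have key := cs.reflectionRep_wordProd ω' t 0
  rw [← h, reflectionRep_wordProd] at key
  simpa using congrArg Prod.snd key

end ReflectionRepresentation

theorem simple_mem_rightInvSeq_of_isRightDescent {ω : List B} {i : B}
    (hi : cs.IsRightDescent (π ω) i) : s i ∈ ris ω := by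
  classical
  obtain ⟨σ, hσ, hσω⟩ := cs.exists_isReduced (π ω * s i)
  have hπ : π (σ.concat i) = π ω := by
    rw [cs.wordProd_concat, ← hσω, cs.simple_mul_simple_cancel_right]
  have hred : cs.IsReduced (σ.concat i) := by
    rw [cs.isRightDescent_iff, hσω, hσ.eq] at hi
    rw [IsReduced, hπ, List.length_concat, ← hi]
  have hcount : (ris (σ.concat i)).count (s i) = 1 :=
    List.count_eq_one_of_mem hred.nodup_rightInvSeq (by rw [rightInvSeq_concat]; simp)
  have hparity := cs.count_rightInvSeq_eq_of_wordProd_eq hπ.symm (s i)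
  rw [hcount] at hparity
  by_contra hnot
  rw [List.count_eq_zero_of_not_mem hnot] at hparity
  exact zero_ne_one hparity

theorem exists_wordProd_mul_simple_eq_eraseIdx {ω : List B} {i : B}
    (hi : cs.IsRightDescent (π ω) i) : ∃ j < ω.length, π ω * s i = π (ω.eraseIdx j) := by
  obtain ⟨j, hj, hjt⟩ := List.getElem_of_mem (cs.simple_mem_rightInvSeq_of_isRightDescent hi)
  rw [cs.length_rightInvSeq] at hj
  refine ⟨j, hj, ?_⟩
  rw [← hjt, ← List.getD_eq_getElem _ 1, cs.wordProd_mul_getD_rightInvSeq]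

section Parabolic

variable (I : Set B)

theorem mem_closure_simple_image_iff {v : W} :
    v ∈ Subgroup.closure (cs.simple '' I) ↔ ∃ ω : List B, (∀ j ∈ ω, j ∈ I) ∧ π ω = v := by
  constructor
  · intro hv
    induction hv using Subgroup.closure_induction with
    | mem _ hv =>
      obtain ⟨i, hi, rfl⟩ := hv
      exact ⟨[i], by simpa using hi, cs.wordProd_singleton i⟩
    | one => exact ⟨[], by simp, cs.wordProd_nil⟩
    | mul _ _ _ _ ih₁ ih₂ =>
      obtain ⟨ω₁, h₁, rfl⟩ := ih₁
      obtain ⟨ω₂, h₂, rfl⟩ := ih₂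
      exact ⟨ω₁ ++ ω₂, fun j hj ↦ (List.mem_append.1 hj).elim (h₁ j) (h₂ j),
        cs.wordProd_append ω₁ ω₂⟩
    | inv _ _ ih =>
      obtain ⟨ω, h, rfl⟩ := ih
      exact ⟨ω.reverse, by simpa using h, cs.wordProd_reverse ω⟩
  · rintro ⟨ω, hω, rfl⟩
    induction ω with
    | nil => exact Subgroup.one_mem _
    | cons i ω ih =>
      rw [cs.wordProd_cons]
      exact Subgroup.mul_mem _ (Subgroup.subset_closure ⟨i, hω i (by simp), rfl⟩)
        (ih fun j hj ↦ hω j (by simp [hj]))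

def IsMinimalInCoset (x : W) : Prop := ∀ v ∈ Subgroup.closure (cs.simple '' I), ℓ x ≤ ℓ (x * v)

theorem exists_isMinimalInCoset_mul (w : W) :
    ∃ v ∈ Subgroup.closure (cs.simple '' I), cs.IsMinimalInCoset I (w * v) := by
  obtain ⟨v, hv, hmin⟩ := exists_minimalFor_of_wellFoundedLT
    (· ∈ Subgroup.closure (cs.simple '' I)) (fun v ↦ ℓ (w * v)) ⟨1, Subgroup.one_mem _⟩
  refine ⟨v, hv, fun u hu ↦ ?_⟩
  rw [mul_assoc]
  exact le_of_not_gt fun hlt ↦ hlt.not_ge (hmin (Subgroup.mul_mem _ hv hu) hlt.le)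

theorem not_isRightDescent_mul_wordProd {x : W} (hx : cs.IsMinimalInCoset I x) {σ : List B}
    {i : B} (hσ : MinimalFor (fun τ ↦ (∀ j ∈ τ, j ∈ I) ∧ π τ = π (σ ++ [i])) List.length
      (σ ++ [i])) :
    ¬cs.IsRightDescent (x * π σ) i := by
  intro hdesc
  obtain ⟨ωx, hωx, rfl⟩ := cs.exists_isReduced x
  rw [← wordProd_append] at hdesc
  obtain ⟨j, -, hj⟩ := cs.exists_wordProd_mul_simple_eq_eraseIdx hdesc
  -- Deleting a letter of `ωx` gives a shorter element of `x W_I`, deleting one of `σ` a shorter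
  -- word for `π (σ ++ [i])`.
  rcases lt_or_ge j ωx.length with hjx | hjx
  · rw [List.eraseIdx_append_of_lt_length hjx, wordProd_append, wordProd_append] at hj
    have hconj : π σ * s i * (π σ)⁻¹ ∈ Subgroup.closure (cs.simple '' I) := by
      rw [← wordProd_singleton, ← wordProd_append, ← wordProd_reverse, ← wordProd_append,
        mem_closure_simple_image_iff]
      refine ⟨_, fun j hj ↦ hσ.1.1 j ?_, rfl⟩
      simp only [List.mem_append, List.mem_reverse] at hj ⊢
      tauto
    have hshorter := hx _ hconj
    rw [← mul_assoc, ← mul_assoc, hj, mul_inv_cancel_right] at hshorter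
    have hle := cs.length_wordProd_le (ωx.eraseIdx j)
    rw [List.length_eraseIdx_of_lt hjx] at hle
    have := hωx.eq
    omega
  · rw [List.eraseIdx_append_of_length_le hjx, wordProd_append, wordProd_append, mul_assoc,
      mul_right_inj] at hj
    have hlen := hσ.2 (j := σ.eraseIdx (j - ωx.length))
      ⟨fun k hk ↦ hσ.1.1 k (by simpa using Or.inl (List.mem_of_mem_eraseIdx hk)),
        by rw [← hj, wordProd_append, wordProd_singleton]⟩
    simp only [List.length_append, List.length_singleton] at hlen
    have := List.length_eraseIdx_le σ (j - ωx.length)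
    omega

theorem exists_isRightDescent_mul_of_ne_one {x : W} (hx : cs.IsMinimalInCoset I x) {v : W}
    (hv : v ∈ Subgroup.closure (cs.simple '' I)) (hv₁ : v ≠ 1) :
    ∃ i ∈ I, cs.IsRightDescent (x * v) i := by
  obtain ⟨ω, hω⟩ := exists_minimalFor_of_wellFoundedLT
    (fun τ ↦ (∀ j ∈ τ, j ∈ I) ∧ π τ = v) List.length ((cs.mem_closure_simple_image_iff I).1 hv)
  obtain rfl | ⟨σ, i, rfl⟩ := ω.eq_nil_or_concat
  · exact absurd hω.1.2.symm hv₁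
  obtain rfl := hω.1.2
  rw [List.concat_eq_append] at hω ⊢
  refine ⟨i, hω.1.1 i (by simp), ?_⟩
  rw [isRightDescent_iff_not_isRightDescent_mul, wordProd_append, wordProd_singleton, ← mul_assoc,
    simple_mul_simple_cancel_right]
  exact cs.not_isRightDescent_mul_wordProd I hx hω

theorem isMinimalInCoset_of_forall_length_lt {x : W} (hx : ∀ i ∈ I, ℓ x < ℓ (x * s i)) :
    cs.IsMinimalInCoset I x := by
  obtain ⟨v, hv, hmin⟩ := cs.exists_isMinimalInCoset_mul I x
  obtain rfl : v = 1 := by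
    by_contra hv₁
    obtain ⟨i, hi, hdesc⟩ := cs.exists_isRightDescent_mul_of_ne_one I hmin (inv_mem hv)
      (inv_ne_one.2 hv₁)
    rw [mul_inv_cancel_right] at hdesc
    exact hdesc.not_gt (hx i hi)
  simpa using hmin

theorem eq_of_mul_eq_mul_of_forall_length_lt {x x' u u' : W}
    (hx : ∀ i ∈ I, ℓ x < ℓ (x * s i)) (hx' : ∀ i ∈ I, ℓ x' < ℓ (x' * s i))
    (hu : u ∈ Subgroup.closure (cs.simple '' I)) (hu' : u' ∈ Subgroup.closure (cs.simple '' I))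
    (h : x * u = x' * u') : u = u' := by
  by_contra hne
  obtain ⟨i, hi, hdesc⟩ := cs.exists_isRightDescent_mul_of_ne_one I
    (cs.isMinimalInCoset_of_forall_length_lt I hx) (mul_mem hu (inv_mem hu'))
    (mul_inv_eq_one.not.2 hne)
  rw [← mul_assoc, h, mul_inv_cancel_right] at hdesc
  exact hdesc.not_gt (hx' i hi)

end Parabolic

end CoxeterSystem

theorem stmt19_general {B W : Type*} [Group W] {M : CoxeterMatrix B} (cs : CoxeterSystem M W)
    (I : Set B) (leL : W → W → Prop)
    (leLI : Subgroup.closure (cs.simple '' I) → Subgroup.closure (cs.simple '' I) →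
      Prop)
    (htrans : Transitive leLI)
    (prI : W → Subgroup.closure (cs.simple '' I))
    (hprI : ∀ w : W, ∀ i ∈ I, cs.length (w * ((prI w : W))⁻¹) <
      cs.length (w * ((prI w : W))⁻¹ * cs.simple i))
    (hind : ∀ x y : W, leL x y → leLI (prI x) (prI y))
    (Γ : Set (Subgroup.closure (cs.simple '' I)))
    (u₀ : Subgroup.closure (cs.simple '' I))
    (hΓ : Γ = {u | leLI u u₀ ∧ leLI u₀ u}) :
    (∀ a ∈ {w : W | ∃ x : W, (∀ i ∈ I, cs.length x < cs.length (x * cs.simple i)) ∧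
        ∃ u ∈ Γ, w = x * (u : W)},
      ∀ b ∈ {w : W | ∃ x : W, (∀ i ∈ I, cs.length x < cs.length (x * cs.simple i)) ∧
        ∃ u ∈ Γ, w = x * (u : W)},
      ∀ z : W, leL a z → leL z b →
        z ∈ {w : W | ∃ x : W, (∀ i ∈ I, cs.length x < cs.length (x * cs.simple i)) ∧
          ∃ u ∈ Γ, w = x * (u : W)}) ∧
    ∀ z ∈ {w : W | ∃ x : W, (∀ i ∈ I, cs.length x < cs.length (x * cs.simple i)) ∧
        ∃ u ∈ Γ, w = x * (u : W)},
      ∀ z' : W, leL z z' → leL z' z →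
        z' ∈ {w : W | ∃ x : W, (∀ i ∈ I, cs.length x < cs.length (x * cs.simple i)) ∧
          ∃ u ∈ Γ, w = x * (u : W)} := by
  subst hΓ
  have hprI_mul : ∀ (x : W) (u : Subgroup.closure (cs.simple '' I)),
      (∀ i ∈ I, cs.length x < cs.length (x * cs.simple i)) → prI (x * u) = u :=
    fun x u hx ↦ Subtype.ext <| cs.eq_of_mul_eq_mul_of_forall_length_lt I (hprI _) hx
      (prI _).2 u.2 (inv_mul_cancel_right _ _)
  have hmem (z : W) : z ∈ {w : W | ∃ x : W,
      (∀ i ∈ I, cs.length x < cs.length (x * cs.simple i)) ∧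
      ∃ u ∈ {u | leLI u u₀ ∧ leLI u₀ u}, w = x * (u : W)} ↔
        leLI (prI z) u₀ ∧ leLI u₀ (prI z) := by
    refine ⟨?_, fun hz ↦ ⟨z * (prI z : W)⁻¹, hprI z, prI z, hz, by group⟩⟩
    rintro ⟨x, hx, u, hu, rfl⟩
    rwa [hprI_mul x u hx]
  refine ⟨fun a ha b hb z haz hzb ↦ ?_, fun z hz z' hzz' hz'z ↦ ?_⟩
  · rw [hmem] at ha hb ⊢
    exact ⟨htrans (hind z b hzb) hb.1, htrans ha.2 (hind a z haz)⟩
  · rw [hmem] at hz ⊢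
    exact ⟨htrans (hind z' z hz'z) hz.1, htrans hz.2 (hind z z' hzz')⟩

/-- Let `(W,S)` be a Coxeter system, `I ⊆ S`, with parabolic subgroup `W_I`,
distinguished coset representatives `X_I = {w | ℓ(ws) > ℓ(w) for all s ∈ I}` and
projection `pr_I : W → W_I` (so that `w·pr_I(w)⁻¹ ∈ X_I`).  Let `≤_L` be a relation on
`W` and `≤_{L,I}` a reflexive, transitive relation on `W_I`, and suppose (the induction
theorem for cells) that `x ≤_L y` implies `pr_I(x) ≤_{L,I} pr_I(y)`.  Then for every
left cell `Γ` of `W_I` (i.e. an equivalence class of `∼_{L,I}`), the set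
`X_I·Γ = {xu | x ∈ X_I, u ∈ Γ}` is left-closed in `W`: for all `a, b ∈ X_I·Γ`,
`{z | a ≤_L z ≤_L b} ⊆ X_I·Γ`; in particular `X_I·Γ` is a union of left cells of
`W`. -/
theorem stmt19 {B W : Type*} [Group W] {M : CoxeterMatrix B} (cs : CoxeterSystem M W)
    (I : Set B) (leL : W → W → Prop)
    (leLI : Subgroup.closure (cs.simple '' I) → Subgroup.closure (cs.simple '' I) →
      Prop)
    (hrefl : Reflexive leLI) (htrans : Transitive leLI)
    (prI : W → Subgroup.closure (cs.simple '' I))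
    (hprI : ∀ w : W, ∀ i ∈ I, cs.length (w * ((prI w : W))⁻¹) <
      cs.length (w * ((prI w : W))⁻¹ * cs.simple i))
    (hind : ∀ x y : W, leL x y → leLI (prI x) (prI y))
    (Γ : Set (Subgroup.closure (cs.simple '' I)))
    (u₀ : Subgroup.closure (cs.simple '' I))
    (hΓ : Γ = {u | leLI u u₀ ∧ leLI u₀ u}) :
    (∀ a ∈ {w : W | ∃ x : W, (∀ i ∈ I, cs.length x < cs.length (x * cs.simple i)) ∧
        ∃ u ∈ Γ, w = x * (u : W)},
      ∀ b ∈ {w : W | ∃ x : W, (∀ i ∈ I, cs.length x < cs.length (x * cs.simple i)) ∧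
        ∃ u ∈ Γ, w = x * (u : W)},
      ∀ z : W, leL a z → leL z b →
        z ∈ {w : W | ∃ x : W, (∀ i ∈ I, cs.length x < cs.length (x * cs.simple i)) ∧
          ∃ u ∈ Γ, w = x * (u : W)}) ∧
    ∀ z ∈ {w : W | ∃ x : W, (∀ i ∈ I, cs.length x < cs.length (x * cs.simple i)) ∧
        ∃ u ∈ Γ, w = x * (u : W)},
      ∀ z' : W, leL z z' → leL z' z →
        z' ∈ {w : W | ∃ x : W, (∀ i ∈ I, cs.length x < cs.length (x * cs.simple i)) ∧
          ∃ u ∈ Γ, w = x * (u : W)} :=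
  stmt19_general cs I leL leLI htrans prI hprI hind Γ u₀ hΓ
end
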